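/- arXiv:2306.12615 — 5 statements merged into one kernel-verified Lean document; each statement's English description precedes it below -/
import Mathlib

section
/- Let A, B ∈ Γ(3). Then Γ∞(3)·A = Γ∞(3)·B if and only if Inv(A) = Inv(B), where Inv consists of the bottom row of the matrix together with the bottom row of its second compound matrix. -/
/-- The Eisenstein integers `ℤ[ω]`, realized as `ℤ[X]/(X² + X + 1)`. -/
abbrev Eis : Type := AdjoinRoot (Polynomial.X ^ 2 + Polynomial.X + 1 : Polynomial ℤ)

/-- Membership in the principal congruence subgroup `Γ(3)` of `SL₃(𝔬)`. -/
def Gamma3 (A : Matrix (Fin 3) (Fin 3) Eis) : Prop :=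
  A.det = 1 ∧ ∀ i j, A i j - (1 : Matrix (Fin 3) (Fin 3) Eis) i j ∈ Ideal.span {(3 : Eis)}

/-- Membership in `Γ∞(3)`: upper triangular unipotent matrices in `Γ(3)`. -/
def GammaInf3 (C : Matrix (Fin 3) (Fin 3) Eis) : Prop :=
  (∀ i j : Fin 3, (j : ℕ) < (i : ℕ) → C i j = 0) ∧ (∀ i, C i i = 1) ∧
    ∀ i j, C i j - (1 : Matrix (Fin 3) (Fin 3) Eis) i j ∈ Ideal.span {(3 : Eis)}

/-- The invariants: the bottom row of `A` together with the bottom row of `Λ²(A)`. -/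
noncomputable def InvSix (A : Matrix (Fin 3) (Fin 3) Eis) : Eis × Eis × Eis × Eis × Eis × Eis :=
  (A 2 0, A 2 1, A 2 2, A 1 0 * A 2 1 - A 1 1 * A 2 0,
    A 1 0 * A 2 2 - A 1 2 * A 2 0, A 1 1 * A 2 2 - A 1 2 * A 2 1)

lemma mod3_iff (M : Matrix (Fin 3) (Fin 3) Eis) :
    (∀ i j, M i j - (1 : Matrix (Fin 3) (Fin 3) Eis) i j ∈ Ideal.span {(3 : Eis)}) ↔
      (Ideal.Quotient.mk (Ideal.span {(3 : Eis)})).mapMatrix M = 1 := by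
  constructor
  · intro h
    ext i j
    have := (Ideal.Quotient.mk_eq_mk_iff_sub_mem _ _).mpr (h i j)
    simp [RingHom.mapMatrix_apply, Matrix.map_apply, Matrix.one_apply, apply_ite] at this ⊢; exact this
  · intro h i j
    rw [← Ideal.Quotient.mk_eq_mk_iff_sub_mem]
    have := congrFun (congrFun h i) j
    simpa [RingHom.mapMatrix_apply, Matrix.map_apply, Matrix.one_apply, apply_ite] using this

lemma GammaInf3.one : GammaInf3 1 := by
  refine ⟨?_, ?_, ?_⟩
  · intro i j h
    exact Matrix.one_apply_ne (by omega)
  · simp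
  · intro i j; rw [sub_self]; exact Ideal.zero_mem _

lemma GammaInf3.mul {C D : Matrix (Fin 3) (Fin 3) Eis} (hC : GammaInf3 C) (hD : GammaInf3 D) :
    GammaInf3 (C * D) := by
  obtain ⟨hC1, hC2, hC3⟩ := hC
  obtain ⟨hD1, hD2, hD3⟩ := hD
  have c10 : C 1 0 = 0 := hC1 1 0 (by norm_num)
  have c20 : C 2 0 = 0 := hC1 2 0 (by norm_num)
  have c21 : C 2 1 = 0 := hC1 2 1 (by norm_num)
  have d10 : D 1 0 = 0 := hD1 1 0 (by norm_num)
  have d20 : D 2 0 = 0 := hD1 2 0 (by norm_num)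
  have d21 : D 2 1 = 0 := hD1 2 1 (by norm_num)
  refine ⟨?_, ?_, ?_⟩
  · intro i j h
    fin_cases i <;> fin_cases j <;> simp at h ⊢ <;>
      simp [Matrix.mul_apply, Fin.sum_univ_three, c10, c20, c21, d10, d20, d21]
  · intro i
    fin_cases i <;>
      simp [Matrix.mul_apply, Fin.sum_univ_three, c10, c20, c21, d10, d20, d21,
        hC2 0, hC2 1, hC2 2, hD2 0, hD2 1, hD2 2]
  · rw [mod3_iff] at hC3 hD3 ⊢
    rw [map_mul, hC3, hD3, one_mul]

lemma invSix_mul {C : Matrix (Fin 3) (Fin 3) Eis} (hC : GammaInf3 C)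
    (B : Matrix (Fin 3) (Fin 3) Eis) : InvSix (C * B) = InvSix B := by
  obtain ⟨hC1, hC2, _⟩ := hC
  have c10 : C 1 0 = 0 := hC1 1 0 (by norm_num)
  have c20 : C 2 0 = 0 := hC1 2 0 (by norm_num)
  have c21 : C 2 1 = 0 := hC1 2 1 (by norm_num)
  simp only [InvSix, Matrix.mul_apply, Fin.sum_univ_three, c10, c20, c21,
    hC2 1, hC2 2, Prod.mk.injEq]
  refine ⟨by ring, by ring, by ring, by ring, by ring, by ring⟩

set_option maxHeartbeats 1600000 in
lemma key_lemma {A B : Matrix (Fin 3) (Fin 3) Eis} (hA : Gamma3 A) (hB : Gamma3 B)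
    (h : InvSix A = InvSix B) :
    GammaInf3 (A * B.adjugate) ∧ (A * B.adjugate) * B = A := by
  have hmul : (A * B.adjugate) * B = A := by
    rw [Matrix.mul_assoc, Matrix.adjugate_mul, hB.1, one_smul, Matrix.mul_one]
  simp only [InvSix, Prod.mk.injEq] at h
  obtain ⟨h1, h2, h3, h4, h5, h6⟩ := h
  simp only [h1, h2, h3] at h4 h5 h6
  have hdB := hB.1
  rw [Matrix.det_fin_three] at hdB
  have e20 : (A * B.adjugate) 2 0 = 0 := by
    simp only [Matrix.mul_apply, Fin.sum_univ_three, Matrix.adjugate_fin_three,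
      Matrix.cons_val', Matrix.cons_val_zero, Matrix.cons_val_one, Matrix.head_cons,
      Matrix.empty_val', Matrix.cons_val_fin_one, Matrix.head_fin_const, Matrix.of_apply,
      Matrix.cons_val_two, Matrix.tail_cons]
    rw [h1, h2, h3]; ring
  have e21 : (A * B.adjugate) 2 1 = 0 := by
    simp only [Matrix.mul_apply, Fin.sum_univ_three, Matrix.adjugate_fin_three,
      Matrix.cons_val', Matrix.cons_val_zero, Matrix.cons_val_one, Matrix.head_cons,
      Matrix.empty_val', Matrix.cons_val_fin_one, Matrix.head_fin_const, Matrix.of_apply,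
      Matrix.cons_val_two, Matrix.tail_cons]
    rw [h1, h2, h3]; ring
  have e22 : (A * B.adjugate) 2 2 = 1 := by
    simp only [Matrix.mul_apply, Fin.sum_univ_three, Matrix.adjugate_fin_three,
      Matrix.cons_val', Matrix.cons_val_zero, Matrix.cons_val_one, Matrix.head_cons,
      Matrix.empty_val', Matrix.cons_val_fin_one, Matrix.head_fin_const, Matrix.of_apply,
      Matrix.cons_val_two, Matrix.tail_cons]
    rw [h1, h2, h3]; linear_combination hdB
  have e10 : (A * B.adjugate) 1 0 = 0 := by
    simp only [Matrix.mul_apply, Fin.sum_univ_three, Matrix.adjugate_fin_three,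
      Matrix.cons_val', Matrix.cons_val_zero, Matrix.cons_val_one, Matrix.head_cons,
      Matrix.empty_val', Matrix.cons_val_fin_one, Matrix.head_fin_const, Matrix.of_apply,
      Matrix.cons_val_two, Matrix.tail_cons]
    linear_combination (-(B 1 2)) * h4 + B 1 1 * h5 + (-(B 1 0)) * h6
  have e11 : (A * B.adjugate) 1 1 = 1 := by
    simp only [Matrix.mul_apply, Fin.sum_univ_three, Matrix.adjugate_fin_three,
      Matrix.cons_val', Matrix.cons_val_zero, Matrix.cons_val_one, Matrix.head_cons,
      Matrix.empty_val', Matrix.cons_val_fin_one, Matrix.head_fin_const, Matrix.of_apply,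
      Matrix.cons_val_two, Matrix.tail_cons]
    linear_combination hdB + B 0 2 * h4 + (-(B 0 1)) * h5 + B 0 0 * h6
  have e00 : (A * B.adjugate) 0 0 = 1 := by
    have hdet : (A * B.adjugate).det = 1 := by
      rw [Matrix.det_mul, Matrix.det_adjugate, hA.1, hB.1, one_mul, one_pow]
    rw [Matrix.det_fin_three, e10, e20, e21, e11, e22] at hdet
    linear_combination hdet
  refine ⟨⟨?_, ?_, ?_⟩, hmul⟩
  · intro i j hij
    fin_cases i <;> fin_cases j <;> simp at hij ⊢ <;>
      first
        | exact e10 | exact e20 | exact e21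
  · intro i
    fin_cases i
    · exact e00
    · exact e11
    · exact e22
  · rw [mod3_iff]
    have hAm := (mod3_iff A).mp hA.2
    have hBm := (mod3_iff B).mp hB.2
    rw [map_mul, hAm, RingHom.map_adjugate, hBm, Matrix.adjugate_one, one_mul]

theorem orbit_eq_iff_inv_eq (A B : Matrix (Fin 3) (Fin 3) Eis)
    (hA : Gamma3 A) (hB : Gamma3 B) :
    {X : Matrix (Fin 3) (Fin 3) Eis | ∃ C, GammaInf3 C ∧ X = C * A} =
      {X : Matrix (Fin 3) (Fin 3) Eis | ∃ C, GammaInf3 C ∧ X = C * B} ↔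
    InvSix A = InvSix B := by
  constructor
  · intro hset
    have hAmem : A ∈ {X : Matrix (Fin 3) (Fin 3) Eis | ∃ C, GammaInf3 C ∧ X = C * A} :=
      ⟨1, GammaInf3.one, (one_mul A).symm⟩
    rw [hset] at hAmem
    obtain ⟨C, hC, hACB⟩ := hAmem
    rw [hACB]
    exact invSix_mul hC B
  · intro hInv
    obtain ⟨hD, hDB⟩ := key_lemma hA hB hInv
    obtain ⟨hD', hD'A⟩ := key_lemma hB hA hInv.symm
    ext X
    simp only [Set.mem_setOf_eq]
    constructor
    · rintro ⟨C, hC, rfl⟩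
      exact ⟨C * (A * B.adjugate), hC.mul hD, by rw [Matrix.mul_assoc, hDB]⟩
    · rintro ⟨C, hC, rfl⟩
      exact ⟨C * (B * A.adjugate), hC.mul hD', by rw [Matrix.mul_assoc, hD'A]⟩
end

section
/- If A, B ∈ Γ(3) have equal invariants Inv(A) = Inv(B), then BA⁻¹ is an upper triangular unipotent matrix, hence lies in Γ∞(3). -/
theorem mul_inv_mem_GammaInf3 (A B : Matrix (Fin 3) (Fin 3) Eis)
    (hA : Gamma3 A) (hB : Gamma3 B) (h : InvSix A = InvSix B) :
    GammaInf3 (B * A⁻¹) := by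
  obtain ⟨hdA, hAm⟩ := hA
  obtain ⟨hdB, hBm⟩ := hB
  have hAinv : A⁻¹ = A.adjugate := by
    rw [Matrix.inv_def, hdA]; simp
  simp only [InvSix, Prod.mk.injEq] at h
  obtain ⟨h1, h2, h3, h4, h5, h6⟩ := h
  simp only [h1, h2, h3] at h4 h5 h6
  rw [Matrix.det_fin_three] at hdA
  simp only [h1, h2, h3] at hdA
  rw [Matrix.det_fin_three] at hdB
  have key : ∀ i j, (B * A⁻¹) i j =
      B i 0 * A.adjugate 0 j + B i 1 * A.adjugate 1 j + B i 2 * A.adjugate 2 j := by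
    intro i j
    rw [hAinv, Matrix.mul_apply, Fin.sum_univ_three]
  have e10 : (B * A⁻¹) 1 0 = 0 := by
    rw [key, Matrix.adjugate_fin_three]
    simp only [Matrix.cons_val_zero, Matrix.cons_val_one, Matrix.cons_val_two, Matrix.head_cons,
      Matrix.tail_cons, Matrix.cons_val', Matrix.empty_val', Matrix.cons_val_fin_one,
      Matrix.head_fin_const, Matrix.of_apply, h1, h2, h3]
    linear_combination B 1 0 * h6 - B 1 1 * h5 + B 1 2 * h4
  have e20 : (B * A⁻¹) 2 0 = 0 := by
    rw [key, Matrix.adjugate_fin_three]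
    simp only [Matrix.cons_val_zero, Matrix.cons_val_one, Matrix.cons_val_two, Matrix.head_cons,
      Matrix.tail_cons, Matrix.cons_val', Matrix.empty_val', Matrix.cons_val_fin_one,
      Matrix.head_fin_const, Matrix.of_apply, h1, h2, h3]
    linear_combination B 2 0 * h6 - B 2 1 * h5 + B 2 2 * h4
  have e21 : (B * A⁻¹) 2 1 = 0 := by
    rw [key, Matrix.adjugate_fin_three]
    simp only [Matrix.cons_val_zero, Matrix.cons_val_one, Matrix.cons_val_two, Matrix.head_cons,
      Matrix.tail_cons, Matrix.cons_val', Matrix.empty_val', Matrix.cons_val_fin_one,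
      Matrix.head_fin_const, Matrix.of_apply, h1, h2, h3]
    ring
  have e00 : (B * A⁻¹) 0 0 = 1 := by
    rw [key, Matrix.adjugate_fin_three]
    simp only [Matrix.cons_val_zero, Matrix.cons_val_one, Matrix.cons_val_two, Matrix.head_cons,
      Matrix.tail_cons, Matrix.cons_val', Matrix.empty_val', Matrix.cons_val_fin_one,
      Matrix.head_fin_const, Matrix.of_apply, h1, h2, h3]
    linear_combination hdB + B 0 0 * h6 - B 0 1 * h5 + B 0 2 * h4
  have e11 : (B * A⁻¹) 1 1 = 1 := by
    rw [key, Matrix.adjugate_fin_three]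
    simp only [Matrix.cons_val_zero, Matrix.cons_val_one, Matrix.cons_val_two, Matrix.head_cons,
      Matrix.tail_cons, Matrix.cons_val', Matrix.empty_val', Matrix.cons_val_fin_one,
      Matrix.head_fin_const, Matrix.of_apply, h1, h2, h3]
    linear_combination hdA - A 0 0 * h6 + A 0 1 * h5 - A 0 2 * h4
  have e22 : (B * A⁻¹) 2 2 = 1 := by
    rw [key, Matrix.adjugate_fin_three]
    simp only [Matrix.cons_val_zero, Matrix.cons_val_one, Matrix.cons_val_two, Matrix.head_cons,
      Matrix.tail_cons, Matrix.cons_val', Matrix.empty_val', Matrix.cons_val_fin_one,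
      Matrix.head_fin_const, Matrix.of_apply, h1, h2, h3]
    linear_combination hdA
  refine ⟨?_, ?_, ?_⟩
  · intro i j hij
    fin_cases i <;> fin_cases j <;> simp at hij ⊢
    · exact e10
    · exact e20
    · exact e21
  · intro i
    fin_cases i
    · exact e00
    · exact e11
    · exact e22
  · intro i j
    set φ : Eis →+* Eis ⧸ Ideal.span {(3 : Eis)} := Ideal.Quotient.mk (Ideal.span {(3 : Eis)})
    have hφA : A.map φ = 1 := by
      ext i j
      have := hAm i j
      rw [← Ideal.Quotient.eq_zero_iff_mem, map_sub, sub_eq_zero] at this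
      simpa [Matrix.map_apply, Matrix.one_apply, apply_ite φ] using this
    have hφB : B.map φ = 1 := by
      ext i j
      have := hBm i j
      rw [← Ideal.Quotient.eq_zero_iff_mem, map_sub, sub_eq_zero] at this
      simpa [Matrix.map_apply, Matrix.one_apply, apply_ite φ] using this
    have hadj : A.adjugate.map φ = 1 := by
      have h := φ.map_adjugate A
      rw [RingHom.mapMatrix_apply, RingHom.mapMatrix_apply, hφA, Matrix.adjugate_one] at h
      exact h
    have hmap : (B * A⁻¹).map φ = 1 := by
      rw [hAinv, Matrix.map_mul, hφB, hadj, one_mul]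
    rw [← Ideal.Quotient.eq_zero_iff_mem, map_sub, sub_eq_zero]
    have := congrFun (congrFun hmap i) j
    rw [Matrix.map_apply] at this
    rw [this]
    simp [Matrix.one_apply, apply_ite φ]
end

section
/- Let R be a Bézout domain and a, b ∈ R, not both zero. Suppose r, s ∈ R satisfy ra + sb = 0 and gcd(r, s) = 1, and p, q ∈ R satisfy ps − qr = 1. Then pa + qb is a gcd of a and b, i.e., (pa+qb)R = aR + bR. -/
theorem top_row_gives_gcd {R : Type*} [CommRing R] [IsDomain R] [IsBezout R]
    (a b r s p q : R) (hab : ¬(a = 0 ∧ b = 0))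
    (h0 : r * a + s * b = 0) (hrs : Ideal.span {r, s} = (⊤ : Ideal R))
    (hdet : p * s - q * r = 1) :
    Ideal.span {p * a + q * b} = Ideal.span {a, b} := by
  have ha : a = s * (p * a + q * b) := by linear_combination -a * hdet - q * h0
  have hb : b = -r * (p * a + q * b) := by linear_combination -b * hdet + p * h0
  apply le_antisymm
  · rw [Ideal.span_le, Set.singleton_subset_iff]
    exact Ideal.mem_span_pair.2 ⟨p, q, rfl⟩
  · rw [Ideal.span_le]
    rintro x (rfl | rfl)
    · exact Ideal.mem_span_singleton.2 ⟨s, by rw [mul_comm]; exact ha⟩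
    · exact Ideal.mem_span_singleton.2 ⟨-r, by rw [mul_comm]; exact hb⟩
end

section
/- Every A ∈ SL₃(𝔬), where 𝔬 is a Euclidean domain (e.g. the Eisenstein integers), can be written as A = φ₂(y₁⁻¹)·φ₁(y₂⁻¹)·φ₂(y₃⁻¹)·T where y₁, y₂, y₃ ∈ SL₂(𝔬) and T is upper triangular in SL₃(𝔬). -/
def Lam2 {R : Type*} [CommRing R] (A : Matrix (Fin 3) (Fin 3) R) : Matrix (Fin 3) (Fin 3) R :=
  !![A 0 0 * A 1 1 - A 0 1 * A 1 0, A 0 0 * A 1 2 - A 0 2 * A 1 0, A 0 1 * A 1 2 - A 1 1 * A 0 2;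
     A 0 0 * A 2 1 - A 0 1 * A 2 0, A 0 0 * A 2 2 - A 0 2 * A 2 0, A 0 1 * A 2 2 - A 2 1 * A 0 2;
     A 1 0 * A 2 1 - A 1 1 * A 2 0, A 1 0 * A 2 2 - A 1 2 * A 2 0, A 1 1 * A 2 2 - A 1 2 * A 2 1]

def Ups1 {R : Type*} [CommRing R] (A : Matrix (Fin 3) (Fin 3) R) : Matrix (Fin 3) (Fin 3) R :=
  !![A 2 2, -A 1 2, A 0 2; -A 2 1, A 1 1, -A 0 1; A 2 0, -A 1 0, A 0 0]

def phi1 {R : Type*} [CommRing R] (y : Matrix (Fin 2) (Fin 2) R) : Matrix (Fin 3) (Fin 3) R :=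
  !![y 0 0, y 0 1, 0; y 1 0, y 1 1, 0; 0, 0, 1]

def phi2 {R : Type*} [CommRing R] (y : Matrix (Fin 2) (Fin 2) R) : Matrix (Fin 3) (Fin 3) R :=
  !![1, 0, 0; 0, y 0 0, y 0 1; 0, y 1 0, y 1 1]

lemma row_kill {R : Type*} [EuclideanDomain R] (a b : R) :
    ∃ g : Matrix.SpecialLinearGroup (Fin 2) R,
      (↑g : Matrix (Fin 2) (Fin 2) R) 1 0 * a + (↑g : Matrix (Fin 2) (Fin 2) R) 1 1 * b = 0 := by
  classical
  by_cases h : EuclideanDomain.gcd a b = 0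
  · have ha : a = 0 := (EuclideanDomain.gcd_eq_zero_iff.mp h).1
    have hb : b = 0 := (EuclideanDomain.gcd_eq_zero_iff.mp h).2
    exact ⟨1, by simp [ha, hb]⟩
  · obtain ⟨a', ha⟩ := EuclideanDomain.gcd_dvd_left a b
    obtain ⟨b', hb⟩ := EuclideanDomain.gcd_dvd_right a b
    set u := EuclideanDomain.gcdA a b with hu
    set v := EuclideanDomain.gcdB a b with hv
    have hd : EuclideanDomain.gcd a b = a * u + b * v := EuclideanDomain.gcd_eq_gcd_ab a b
    have h2 : EuclideanDomain.gcd a b * (u * a' + v * b') = EuclideanDomain.gcd a b * 1 := by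
      linear_combination (-1 : R) * hd + (-u) * ha + (-v) * hb
    have key : u * a' + v * b' = 1 := mul_left_cancel₀ h h2
    have hdet : (!![u, v; -b', a'] : Matrix (Fin 2) (Fin 2) R).det = 1 := by
      rw [Matrix.det_fin_two_of]; linear_combination key
    refine ⟨⟨!![u, v; -b', a'], hdet⟩, ?_⟩
    show -b' * a + a' * b = 0
    linear_combination (-b') * ha + a' * hb

lemma phi1_mul {R : Type*} [CommRing R] (a b : Matrix (Fin 2) (Fin 2) R) :
    phi1 a * phi1 b = phi1 (a * b) := by
  ext i j
  fin_cases i <;> fin_cases j <;>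
    simp [phi1, Matrix.mul_apply, Fin.sum_univ_three, Fin.sum_univ_two, Matrix.vecHead, Matrix.vecTail]

lemma phi2_mul {R : Type*} [CommRing R] (a b : Matrix (Fin 2) (Fin 2) R) :
    phi2 a * phi2 b = phi2 (a * b) := by
  ext i j
  fin_cases i <;> fin_cases j <;>
    simp [phi2, Matrix.mul_apply, Fin.sum_univ_three, Fin.sum_univ_two, Matrix.vecHead, Matrix.vecTail]

lemma phi1_one {R : Type*} [CommRing R] : phi1 (1 : Matrix (Fin 2) (Fin 2) R) = 1 := by
  ext i j
  fin_cases i <;> fin_cases j <;> simp [phi1, Matrix.one_apply, Matrix.vecHead, Matrix.vecTail]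

lemma phi2_one {R : Type*} [CommRing R] : phi2 (1 : Matrix (Fin 2) (Fin 2) R) = 1 := by
  ext i j
  fin_cases i <;> fin_cases j <;> simp [phi2, Matrix.one_apply, Matrix.vecHead, Matrix.vecTail]

lemma det_phi1 {R : Type*} [CommRing R] (g : Matrix (Fin 2) (Fin 2) R) :
    (phi1 g).det = g.det := by
  simp [phi1, Matrix.det_fin_three, Matrix.det_fin_two]

lemma det_phi2 {R : Type*} [CommRing R] (g : Matrix (Fin 2) (Fin 2) R) :
    (phi2 g).det = g.det := by
  simp [phi2, Matrix.det_fin_three, Matrix.det_fin_two]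

lemma phi1_inv_mul {R : Type*} [CommRing R] (y : Matrix.SpecialLinearGroup (Fin 2) R) :
    phi1 (↑(y⁻¹) : Matrix (Fin 2) (Fin 2) R) * phi1 (↑y : Matrix (Fin 2) (Fin 2) R) = 1 := by
  rw [phi1_mul, ← Matrix.SpecialLinearGroup.coe_mul, inv_mul_cancel,
    Matrix.SpecialLinearGroup.coe_one, phi1_one]

lemma phi2_inv_mul {R : Type*} [CommRing R] (y : Matrix.SpecialLinearGroup (Fin 2) R) :
    phi2 (↑(y⁻¹) : Matrix (Fin 2) (Fin 2) R) * phi2 (↑y : Matrix (Fin 2) (Fin 2) R) = 1 := by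
  rw [phi2_mul, ← Matrix.SpecialLinearGroup.coe_mul, inv_mul_cancel,
    Matrix.SpecialLinearGroup.coe_one, phi2_one]

theorem sl3_decomposition {R : Type*} [EuclideanDomain R]
    (A : Matrix (Fin 3) (Fin 3) R) (hA : A.det = 1) :
    ∃ y₁ y₂ y₃ : Matrix.SpecialLinearGroup (Fin 2) R,
      ∃ T : Matrix (Fin 3) (Fin 3) R, T.det = 1 ∧
        (∀ i j : Fin 3, (j : ℕ) < (i : ℕ) → T i j = 0) ∧
        A = phi2 (↑(y₁⁻¹) : Matrix (Fin 2) (Fin 2) R) *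
          phi1 (↑(y₂⁻¹) : Matrix (Fin 2) (Fin 2) R) *
          phi2 (↑(y₃⁻¹) : Matrix (Fin 2) (Fin 2) R) * T := by
  obtain ⟨y₁, h1⟩ := row_kill (A 1 0) (A 2 0)
  set C : Matrix (Fin 3) (Fin 3) R := phi2 (↑y₁) * A with hCdef
  have hC20 : C 2 0 = 0 := by
    rw [hCdef, Matrix.mul_apply, Fin.sum_univ_three]
    simp [phi2, Matrix.vecHead, Matrix.vecTail]
    linear_combination h1
  obtain ⟨y₂, h2⟩ := row_kill (C 0 0) (C 1 0)
  set D : Matrix (Fin 3) (Fin 3) R := phi1 (↑y₂) * C with hDdef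
  have hD10 : D 1 0 = 0 := by
    rw [hDdef, Matrix.mul_apply, Fin.sum_univ_three]
    simp [phi1, Matrix.vecHead, Matrix.vecTail]
    linear_combination h2
  have hD20 : D 2 0 = 0 := by
    rw [hDdef, Matrix.mul_apply, Fin.sum_univ_three]
    simp [phi1, Matrix.vecHead, Matrix.vecTail, hC20]
  obtain ⟨y₃, h3⟩ := row_kill (D 1 1) (D 2 1)
  set T : Matrix (Fin 3) (Fin 3) R := phi2 (↑y₃) * D with hTdef
  have hT10 : T 1 0 = 0 := by
    rw [hTdef, Matrix.mul_apply, Fin.sum_univ_three]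
    simp [phi2, Matrix.vecHead, Matrix.vecTail, hD10, hD20]
  have hT20 : T 2 0 = 0 := by
    rw [hTdef, Matrix.mul_apply, Fin.sum_univ_three]
    simp [phi2, Matrix.vecHead, Matrix.vecTail, hD10, hD20]
  have hT21 : T 2 1 = 0 := by
    rw [hTdef, Matrix.mul_apply, Fin.sum_univ_three]
    simp [phi2, Matrix.vecHead, Matrix.vecTail]
    linear_combination h3
  refine ⟨y₁, y₂, y₃, T, ?_, ?_, ?_⟩
  · rw [hTdef, hDdef, hCdef]
    simp [Matrix.det_mul, det_phi1, det_phi2, y₁.prop, y₂.prop, y₃.prop, hA]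
  · intro i j hij
    fin_cases i <;> fin_cases j <;>
      first
        | exact hT10 | exact hT20 | exact hT21
        | exact absurd hij (by norm_num)
  · have e3 : ∀ X : Matrix (Fin 3) (Fin 3) R,
        X * phi2 (↑(y₃⁻¹) : Matrix (Fin 2) (Fin 2) R) * phi2 (↑y₃) = X := fun X => by
      rw [mul_assoc, phi2_inv_mul, mul_one]
    have e2 : ∀ X : Matrix (Fin 3) (Fin 3) R,
        X * phi1 (↑(y₂⁻¹) : Matrix (Fin 2) (Fin 2) R) * phi1 (↑y₂) = X := fun X => by
      rw [mul_assoc, phi1_inv_mul, mul_one]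
    symm
    calc phi2 (↑(y₁⁻¹) : Matrix (Fin 2) (Fin 2) R) * phi1 (↑(y₂⁻¹)) * phi2 (↑(y₃⁻¹)) * T
        = phi2 (↑(y₁⁻¹) : Matrix (Fin 2) (Fin 2) R) * phi1 (↑(y₂⁻¹)) * phi2 (↑(y₃⁻¹)) *
            phi2 (↑y₃) * phi1 (↑y₂) * phi2 (↑y₁) * A := by
          rw [hTdef, hDdef, hCdef]; simp only [mul_assoc]
      _ = phi2 (↑(y₁⁻¹) : Matrix (Fin 2) (Fin 2) R) * phi1 (↑(y₂⁻¹)) * phi1 (↑y₂) *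
            phi2 (↑y₁) * A := by
          rw [e3 (phi2 (↑(y₁⁻¹) : Matrix (Fin 2) (Fin 2) R) * phi1 (↑(y₂⁻¹) : Matrix (Fin 2) (Fin 2) R))]
      _ = phi2 (↑(y₁⁻¹) : Matrix (Fin 2) (Fin 2) R) * phi2 (↑y₁) * A := by
          rw [e2 (phi2 (↑(y₁⁻¹) : Matrix (Fin 2) (Fin 2) R))]
      _ = A := by rw [phi2_inv_mul, one_mul]
end

section
/- Suppose (A₁,B₁,C₁,A₂,B₂,C₂) ∈ 𝔬⁶ satisfies the invariant conditions with A₁ = B₁ = A₂ = 0. Then C₁ = 1, and choosing a, b ∈ 𝔬 with aC₂ − bB₂ = 1, the matrix X = [[a−bB₂, b−bC₂, 0],[B₂, C₂, 0],[0, 0, 1]] lies in Γ(3) and satisfies Inv(X) = (0, 0, 1, 0, B₂, C₂). -/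
namespace Eis

open Polynomial

local notation "ω" => (AdjoinRoot.root (X ^ 2 + X + 1 : ℤ[X]) : Eis)

lemma root_sq_add_root_add_one : ω ^ 2 + ω + 1 = 0 := by
  have := AdjoinRoot.eval₂_root (X ^ 2 + X + 1 : ℤ[X])
  simpa only [eval₂_add, eval₂_pow, eval₂_X, eval₂_one] using this

lemma natDegree_X_sq_add_X_add_one : (X ^ 2 + X + 1 : ℤ[X]).natDegree = 2 := by compute_degree!

noncomputable def basis : Module.Basis (Fin 2) ℤ Eis :=
  (AdjoinRoot.powerBasis' (g := (X ^ 2 + X + 1 : ℤ[X])) (by monicity!)).basis.reindex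
    (finCongr natDegree_X_sq_add_X_add_one)

lemma basis_apply (i : Fin 2) : basis i = ω ^ (i : ℕ) := by
  simp only [basis, Module.Basis.coe_reindex, PowerBasis.coe_basis, AdjoinRoot.powerBasis'_gen,
    Function.comp_apply]
  rfl

lemma exists_eq_intCast_add_intCast_mul_root (x : Eis) : ∃ a b : ℤ, x = a + b * ω := by
  refine ⟨basis.repr x 0, basis.repr x 1, ?_⟩
  conv_lhs => rw [← basis.sum_repr x]
  simp [Fin.sum_univ_two, basis_apply, zsmul_eq_mul]

lemma intCast_add_intCast_mul_root_eq_zero {a b : ℤ} (h : (a : Eis) + b * ω = 0) :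
    a = 0 ∧ b = 0 := by
  have := Fintype.linearIndependent_iff.mp basis.linearIndependent ![a, b]
    (by simpa [Fin.sum_univ_two, basis_apply, zsmul_eq_mul] using h)
  exact ⟨this 0, this 1⟩

-- `normForm a b` is the norm of `a + b ω`.
def normForm (a b : ℤ) : ℤ := a ^ 2 - a * b + b ^ 2

lemma normForm_mul (a b c d : ℤ) :
    normForm a b * normForm c d = normForm (a * c - b * d) (a * d + b * c - b * d) := by
  unfold normForm; ring

lemma normForm_nonneg (a b : ℤ) : 0 ≤ normForm a b := by
  unfold normForm; nlinarith [sq_nonneg (2 * a - b), sq_nonneg b]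

lemma eq_zero_of_normForm_one_add_three_mul {u v : ℤ} (h : normForm (1 + 3 * u) (3 * v) = 1) :
    u = 0 ∧ v = 0 := by
  have htrace : 2 * u - v = -3 * normForm u v := by unfold normForm at *; linarith
  have hbound : (2 * u - v) ^ 2 ≤ 4 * normForm u v := by
    unfold normForm; nlinarith [sq_nonneg v]
  have hN : normForm u v = 0 := by
    nlinarith [normForm_nonneg u v]
  unfold normForm at hN htrace
  have hv : v = 0 := by nlinarith [sq_nonneg (2 * u - v)]
  subst hv
  exact ⟨by linarith, rfl⟩

lemma normForm_eq_one_of_mul_eq_one {a b c d : ℤ} (h : ((a : Eis) + b * ω) * (c + d * ω) = 1) :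
    normForm a b = 1 := by
  obtain ⟨h₀, h₁⟩ := intCast_add_intCast_mul_root_eq_zero
    (a := a * c - b * d - 1) (b := a * d + b * c - b * d)
    (by push_cast; linear_combination h - (b * d : Eis) * root_sq_add_root_add_one)
  have hprod : normForm a b * normForm c d = 1 := by
    rw [normForm_mul, show a * c - b * d = 1 by linarith, h₁]; rfl
  exact Int.eq_one_of_mul_eq_one_right (normForm_nonneg a b) hprod

lemma eq_one_of_isUnit_of_sub_one_mem {x : Eis} (hu : IsUnit x)
    (h : x - 1 ∈ Ideal.span {(3 : Eis)}) : x = 1 := by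
  obtain ⟨y, hxy⟩ := hu.exists_right_inv
  obtain ⟨t, ht⟩ := Ideal.mem_span_singleton.mp h
  obtain ⟨u, v, rfl⟩ := exists_eq_intCast_add_intCast_mul_root t
  obtain ⟨c, d, rfl⟩ := exists_eq_intCast_add_intCast_mul_root y
  have hx : x = ((1 + 3 * u : ℤ) : Eis) + ((3 * v : ℤ) : Eis) * ω := by
    push_cast; linear_combination ht
  rw [hx] at hxy ⊢
  obtain ⟨rfl, rfl⟩ := eq_zero_of_normForm_one_add_three_mul (normForm_eq_one_of_mul_eq_one hxy)
  simp

end Eis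

section Representative

variable {R : Type*} [CommRing R]

lemma isUnit_of_span_zero_zero_eq_top {C : R} (h : Ideal.span {(0 : R), 0, C} = ⊤) : IsUnit C := by
  rwa [Ideal.span_insert_zero, Ideal.span_insert_zero, Ideal.span_singleton_eq_top] at h

lemma exists_mul_sub_mul_eq_one_of_span_eq_top {B C : R} (h : Ideal.span {(0 : R), B, C} = ⊤) :
    ∃ a b : R, a * C - b * B = 1 := by
  rw [Ideal.span_insert_zero, Ideal.eq_top_iff_one, Ideal.mem_span_pair] at h
  obtain ⟨u, v, huv⟩ := h
  exact ⟨v, -u, by linear_combination huv⟩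

variable {a b B C : R}

lemma det_representative (h : a * C - b * B = 1) :
    (!![a - b * B, b - b * C, 0; B, C, 0; 0, 0, 1] : Matrix (Fin 3) (Fin 3) R).det = 1 := by
  simp only [Matrix.det_fin_three, Matrix.of_apply, Matrix.cons_val', Matrix.cons_val_zero,
    Matrix.cons_val_fin_one, Matrix.cons_val_one, Matrix.cons_val, mul_one, mul_zero, sub_zero,
    add_zero, zero_mul]
  linear_combination h

lemma representative_sub_one_mem {I : Ideal R} (hB : B ∈ I) (hC : C - 1 ∈ I)
    (h : a * C - b * B = 1) (i j : Fin 3) :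
    (!![a - b * B, b - b * C, 0; B, C, 0; 0, 0, 1] : Matrix (Fin 3) (Fin 3) R) i j -
      (1 : Matrix (Fin 3) (Fin 3) R) i j ∈ I := by
  have h00 : a - b * B - 1 = -a * (C - 1) := by linear_combination h
  have h01 : b - b * C = -b * (C - 1) := by ring
  fin_cases i <;> fin_cases j <;> simp [h00, h01, hB, hC, I.mul_mem_left]

end Representative

theorem case5_representative_general (C₁ B₂ C₂ : Eis)
    (hB₂ : B₂ ∈ Ideal.span {(3 : Eis)})
    (hC₁ : C₁ - 1 ∈ Ideal.span {(3 : Eis)})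
    (hC₂ : C₂ - 1 ∈ Ideal.span {(3 : Eis)})
    (hgcd1 : Ideal.span {(0 : Eis), 0, C₁} = (⊤ : Ideal Eis))
    (hgcd2 : Ideal.span {(0 : Eis), B₂, C₂} = (⊤ : Ideal Eis)) :
    C₁ = 1 ∧ (∃ a b : Eis, a * C₂ - b * B₂ = 1) ∧
    ∀ a b : Eis, a * C₂ - b * B₂ = 1 →
      let X : Matrix (Fin 3) (Fin 3) Eis :=
        !![a - b * B₂, b - b * C₂, 0; B₂, C₂, 0; 0, 0, 1]
      X.det = 1 ∧
      (∀ i j, X i j - (1 : Matrix (Fin 3) (Fin 3) Eis) i j ∈ Ideal.span {(3 : Eis)}) ∧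
      (X 2 0, X 2 1, X 2 2, X 1 0 * X 2 1 - X 1 1 * X 2 0,
        X 1 0 * X 2 2 - X 1 2 * X 2 0, X 1 1 * X 2 2 - X 1 2 * X 2 1) =
        ((0 : Eis), 0, 1, 0, B₂, C₂) := by
  refine ⟨Eis.eq_one_of_isUnit_of_sub_one_mem (isUnit_of_span_zero_zero_eq_top hgcd1) hC₁,
    exists_mul_sub_mul_eq_one_of_span_eq_top hgcd2, fun a b hab => ?_⟩
  exact ⟨det_representative hab, representative_sub_one_mem hB₂ hC₂ hab, by simp⟩

theorem case5_representative (C₁ B₂ C₂ : Eis)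
    (hB₂ : B₂ ∈ Ideal.span {(3 : Eis)})
    (hC₁ : C₁ - 1 ∈ Ideal.span {(3 : Eis)})
    (hC₂ : C₂ - 1 ∈ Ideal.span {(3 : Eis)})
    (hgcd1 : Ideal.span {(0 : Eis), 0, C₁} = (⊤ : Ideal Eis))
    (hgcd2 : Ideal.span {(0 : Eis), B₂, C₂} = (⊤ : Ideal Eis))
    (hI4 : (0 : Eis) * C₂ - 0 * B₂ + C₁ * 0 = 0) :
    C₁ = 1 ∧ (∃ a b : Eis, a * C₂ - b * B₂ = 1) ∧
    ∀ a b : Eis, a * C₂ - b * B₂ = 1 →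
      let X : Matrix (Fin 3) (Fin 3) Eis :=
        !![a - b * B₂, b - b * C₂, 0; B₂, C₂, 0; 0, 0, 1]
      X.det = 1 ∧
      (∀ i j, X i j - (1 : Matrix (Fin 3) (Fin 3) Eis) i j ∈ Ideal.span {(3 : Eis)}) ∧
      (X 2 0, X 2 1, X 2 2, X 1 0 * X 2 1 - X 1 1 * X 2 0,
        X 1 0 * X 2 2 - X 1 2 * X 2 0, X 1 1 * X 2 2 - X 1 2 * X 2 1) =
        ((0 : Eis), 0, 1, 0, B₂, C₂) :=
  case5_representative_general C₁ B₂ C₂ hB₂ hC₁ hC₂ hgcd1 hgcd2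
end
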